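/- Let G be a graph with burning number k = b(G) that admits an optimal burning sequence (v_1, ..., v_k) in which v_k is a redundant source (i.e., some neighbor of v_k is already burned in round k−1, equivalently the balls N_{k−l}[v_l] for l = 1,...,k−1 already cover V(G)). Then for all n ∈ ℕ, b(G ⊠ K_n) = b(G). -/

import Mathlib

/-- Zero forcing closure: vertices eventually colored blue. -/
inductive SimpleGraph.Forced {V : Type*} (G : SimpleGraph V) (B : Set V) : V → Prop
  | init (v : V) (hv : v ∈ B) : SimpleGraph.Forced G B v
  | force (v w : V) (hv : SimpleGraph.Forced G B v) (hadj : G.Adj v w)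
      (hall : ∀ u, G.Adj v u → u ≠ w → SimpleGraph.Forced G B u) : SimpleGraph.Forced G B w

def SimpleGraph.IsZeroForcingSet {V : Type*} (G : SimpleGraph V) (B : Set V) : Prop :=
  ∀ v, G.Forced B v

noncomputable def SimpleGraph.zeroForcingNumber {V : Type*} (G : SimpleGraph V) : ℕ :=
  sInf {n | ∃ B : Set V, B.ncard = n ∧ G.IsZeroForcingSet B}

/-- closed ball of radius r -/
def SimpleGraph.closedBall {V : Type*} (G : SimpleGraph V) (v : V) (r : ℕ) : Set V :=
  {w | G.edist v w ≤ (r : ℕ∞)}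

/-- Burning sequence (alternative characterization). -/
def SimpleGraph.IsBurningSeq {V : Type*} (G : SimpleGraph V) {k : ℕ} (s : Fin k → V) : Prop :=
  (∀ i j : Fin k, i ≠ j →
      ((((i : ℕ) : ℤ) - ((j : ℕ) : ℤ)).natAbs : ℕ∞) ≤ G.edist (s i) (s j)) ∧
  (⋃ l : Fin k, G.closedBall (s l) (k - 1 - (l : ℕ))) = Set.univ

noncomputable def SimpleGraph.burningNumber {V : Type*} (G : SimpleGraph V) : ℕ :=
  sInf {k | ∃ s : Fin k → V, G.IsBurningSeq s}

/-- Strong product of graphs. -/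
def SimpleGraph.strongProd {α β : Type*} (G : SimpleGraph α) (H : SimpleGraph β) :
    SimpleGraph (α × β) where
  Adj x y := (x.1 = y.1 ∧ H.Adj x.2 y.2) ∨ (x.2 = y.2 ∧ G.Adj x.1 y.1) ∨
    (G.Adj x.1 y.1 ∧ H.Adj x.2 y.2)
  symm := by
    refine ⟨?_⟩
    rintro ⟨a, b⟩ ⟨c, d⟩ (⟨h1, h2⟩ | ⟨h1, h2⟩ | ⟨h1, h2⟩)
    · exact Or.inl ⟨h1.symm, h2.symm⟩
    · exact Or.inr (Or.inl ⟨h1.symm, h2.symm⟩)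
    · exact Or.inr (Or.inr ⟨h1.symm, h2.symm⟩)
  loopless := by
    refine ⟨?_⟩
    rintro ⟨a, b⟩ (⟨_, h2⟩ | ⟨_, h2⟩ | ⟨h1, _⟩)
    exacts [H.loopless.irrefl b h2, G.loopless.irrefl a h2, G.loopless.irrefl a h1]

instance {α β : Type*} (G : SimpleGraph α) (H : SimpleGraph β)
    [DecidableEq α] [DecidableEq β] [DecidableRel G.Adj] [DecidableRel H.Adj] :
    DecidableRel (G.strongProd H).Adj :=
  fun _ _ => inferInstanceAs (Decidable (_ ∨ _ ∨ _))

section Hypergraph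
variable {V : Type*} [DecidableEq V]

/-- Lazy burning closure on a hypergraph given by its edge set. -/
inductive LazyBurned (E : Finset (Finset V)) (B : Set V) : V → Prop
  | init (v : V) (hv : v ∈ B) : LazyBurned E B v
  | spread (v : V) (h : Finset V) (hE : h ∈ E) (hcard : 2 ≤ h.card) (hv : v ∈ h)
      (hall : ∀ u ∈ h, u ≠ v → LazyBurned E B u) : LazyBurned E B v

def IsLazyBurningSet (E : Finset (Finset V)) (B : Set V) : Prop := ∀ v, LazyBurned E B v

noncomputable def lazyBurningNumber (E : Finset (Finset V)) : ℕ :=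
  sInf {n | ∃ B : Set V, B.ncard = n ∧ IsLazyBurningSet E B}

/-- one round of propagation in hypergraph burning -/
def hSpread (E : Finset (Finset V)) (S : Set V) : Set V :=
  S ∪ {v | ∃ h ∈ E, 2 ≤ h.card ∧ v ∈ h ∧ ∀ u ∈ h, u ≠ v → u ∈ S}

/-- burned vertices after t rounds of the (round-based) hypergraph burning process -/
def hBurnedAt (E : Finset (Finset V)) {k : ℕ} (s : Fin k → V) : ℕ → Set V
  | 0 => ∅
  | t + 1 => hSpread E (hBurnedAt E s t) ∪ {v | ∃ ht : t < k, v = s ⟨t, ht⟩}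

noncomputable def hBurningNumber (E : Finset (Finset V)) : ℕ :=
  sInf {k | ∃ s : Fin k → V,
    (∀ t : Fin k, s t ∉ hBurnedAt E s (t : ℕ)) ∧ hBurnedAt E s k = Set.univ}

/-- incidence graph of a hypergraph -/
def IG (E : Finset (Finset V)) : SimpleGraph (V ⊕ {h // h ∈ E}) where
  Adj x y := (∃ v h, x = Sum.inl v ∧ y = Sum.inr h ∧ v ∈ (h : Finset V)) ∨
    (∃ v h, x = Sum.inr h ∧ y = Sum.inl v ∧ v ∈ (h : Finset V))
  symm := by
    refine ⟨?_⟩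
    rintro x y (⟨v, h, rfl, rfl, hm⟩ | ⟨v, h, rfl, rfl, hm⟩)
    · exact Or.inr ⟨v, h, rfl, rfl, hm⟩
    · exact Or.inl ⟨v, h, rfl, rfl, hm⟩
  loopless := by
    refine ⟨?_⟩
    rintro x (⟨v, h, rfl, he, hm⟩ | ⟨v, h, rfl, he, hm⟩) <;> simp at he

/-- connectivity relation of a hypergraph -/
def hconn (E : Finset (Finset V)) : V → V → Prop :=
  Relation.ReflTransGen (fun u v => ∃ h ∈ E, u ∈ h ∧ v ∈ h)

end Hypergraph

/-!
Lifting the given sequence into one layer of `G ⊠ K_n` does not shrink distances, and every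
source except the last one burns with radius at least one, so its ball swallows whole
`K_n`-fibres; hence `b(G ⊠ K_n) ≤ b(G)`. Conversely, projecting a burning sequence of
`G ⊠ K_n` of length `m` to `G` gives balls of radii `m - 1, …, 0` covering `G`. Such a covering
becomes a burning sequence of length at most `m` greedily: a source that is already burning
when it is lit has its ball inside an earlier one, so it may be replaced by any vertex that
is not burning yet, and if there is none the process has already finished.
-/

namespace SimpleGraph

variable {V W : Type*}

lemma edist_le_of_adj_imp_eq_or_adj {G : SimpleGraph V} {H : SimpleGraph W} (f : V → W)
    (hf : ∀ ⦃u v⦄, G.Adj u v → f u = f v ∨ H.Adj (f u) (f v)) (u v : V) :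
    H.edist (f u) (f v) ≤ G.edist u v := by
  have key : ∀ {u v : V} (p : G.Walk u v), H.edist (f u) (f v) ≤ p.length := by
    intro u v p
    induction p with
    | nil => simp [edist_self]
    | @cons u w v hadj p ih =>
      have hstep : H.edist (f u) (f w) ≤ 1 :=
        edist_le_one_iff_adj_or_eq.2 (hf hadj).symm
      calc H.edist (f u) (f v) ≤ H.edist (f u) (f w) + H.edist (f w) (f v) :=
            SimpleGraph.edist_triangle
        _ ≤ 1 + p.length := add_le_add hstep ih
        _ = (p.cons hadj).length := by rw [Walk.length_cons]; push_cast; ring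
  rw [edist_eq_sInf]
  exact le_sInf (Set.forall_mem_range.2 key)

lemma edist_fst_le_edist_strongProd (G : SimpleGraph V) (H : SimpleGraph W) (x y : V × W) :
    G.edist x.1 y.1 ≤ (G.strongProd H).edist x y :=
  edist_le_of_adj_imp_eq_or_adj Prod.fst
    (by rintro _ _ (⟨h, -⟩ | ⟨-, h⟩ | ⟨h, -⟩) <;> simp [h]) x y

lemma strongProd_completeGraph_adj {β : Type*} {G : SimpleGraph V} {x y : V} (h : G.Adj x y)
    (c d : β) : (G.strongProd (completeGraph β)).Adj (x, c) (y, d) := by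
  by_cases hcd : c = d
  · exact Or.inr (Or.inl ⟨hcd, h⟩)
  · exact Or.inr (Or.inr ⟨h, hcd⟩)

lemma edist_strongProd_completeGraph_le {β : Type*} (G : SimpleGraph V) (g : V → β) (u v : V) :
    (G.strongProd (completeGraph β)).edist (u, g u) (v, g v) ≤ G.edist u v :=
  edist_le_of_adj_imp_eq_or_adj (fun w => (w, g w))
    (fun _ _ h => Or.inr (strongProd_completeGraph_adj h _ _)) u v

lemma closedBall_prod_univ_subset {β : Type*} (G : SimpleGraph V) {r : ℕ} (hr : 1 ≤ r)
    (u : V) (c : β) :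
    G.closedBall u r ×ˢ Set.univ ⊆ (G.strongProd (completeGraph β)).closedBall (u, c) r := by
  classical
  rintro ⟨v, d⟩ ⟨hv, -⟩
  by_cases huv : u = v
  · subst huv
    by_cases hcd : c = d
    · simp [closedBall, hcd, edist_self]
    · have hadj : (G.strongProd (completeGraph β)).Adj (u, c) (u, d) := Or.inl ⟨rfl, hcd⟩
      simp only [closedBall, Set.mem_ofPred_eq, (edist_eq_one_iff_adj.2 hadj)]
      exact_mod_cast hr
  · have := edist_strongProd_completeGraph_le G (Function.update (fun _ => d) u c) u v
    simp only [Function.update_self, Function.update_of_ne (Ne.symm huv)] at this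
    exact this.trans hv

section Cover

variable {G : SimpleGraph V}

def IsBurningCover {m : ℕ} (x : Fin m → V) : Prop :=
  ⋃ l : Fin m, G.closedBall (x l) (m - 1 - l) = Set.univ

def IsSeparatedBelow {m : ℕ} (y : Fin m → V) (t : ℕ) : Prop :=
  ∀ i j : Fin m, i < j → (j : ℕ) < t → ((j - i : ℕ) : ℕ∞) ≤ G.edist (y i) (y j)

lemma closedBall_subset_closedBall {a b : V} {r R : ℕ} (h : G.edist a b + r ≤ R) :
    G.closedBall b r ⊆ G.closedBall a R := fun w hw =>
  calc G.edist a w ≤ G.edist a b + G.edist b w := SimpleGraph.edist_triangle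
    _ ≤ G.edist a b + r := add_le_add le_rfl hw
    _ ≤ R := h

lemma isBurningSeq_of_isSeparatedBelow {m : ℕ} {y : Fin m → V}
    (hsep : G.IsSeparatedBelow y m) (hcov : G.IsBurningCover y) : G.IsBurningSeq y := by
  refine ⟨fun i j hij => ?_, hcov⟩
  rcases lt_or_gt_of_ne hij with h | h
  · have habs : (((i : ℕ) : ℤ) - (j : ℕ)).natAbs = j - i := by omega
    exact habs ▸ hsep i j h j.2
  · have habs : (((i : ℕ) : ℤ) - (j : ℕ)).natAbs = i - j := by omega
    exact habs ▸ edist_comm ▸ hsep j i h i.2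

lemma burningNumber_le_of_isBurningSeq {k : ℕ} {s : Fin k → V} (hs : G.IsBurningSeq s) :
    G.burningNumber ≤ k :=
  Nat.sInf_le ⟨s, hs⟩

lemma IsBurningCover.update {m : ℕ} {y : Fin m → V} (hcov : G.IsBurningCover y) {i j : Fin m}
    (hij : i ≠ j) (hsub : G.closedBall (y j) (m - 1 - j) ⊆ G.closedBall (y i) (m - 1 - i))
    (v : V) : G.IsBurningCover (Function.update y j v) := by
  refine Set.eq_univ_of_forall fun w => ?_
  obtain ⟨l, hl⟩ := Set.mem_iUnion.1 (hcov ▸ Set.mem_univ w)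
  by_cases hlj : l = j
  · subst hlj
    exact Set.mem_iUnion.2 ⟨i, by simpa [Function.update_of_ne hij] using hsub hl⟩
  · exact Set.mem_iUnion.2 ⟨l, by simpa [Function.update_of_ne hlj] using hl⟩

lemma burningNumber_le_of_isSeparatedBelow {m t : ℕ} {y : Fin m → V} (ht : t ≤ m)
    (hsep : G.IsSeparatedBelow y t)
    (hcov : ⋃ i : Fin t, G.closedBall (y (Fin.castLE ht i)) (t - 1 - i) = Set.univ) :
    G.burningNumber ≤ t :=
  burningNumber_le_of_isBurningSeq <| isBurningSeq_of_isSeparatedBelow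
    (fun _ j hij _ => hsep _ _ hij j.2) hcov

lemma IsBurningCover.exists_isSeparatedBelow_succ {m t : ℕ} {y : Fin m → V}
    (hcov : G.IsBurningCover y) (hsep : G.IsSeparatedBelow y t) (ht : t < m) :
    G.burningNumber ≤ m ∨
      ∃ y' : Fin m → V, G.IsBurningCover y' ∧ G.IsSeparatedBelow y' (t + 1) := by
  let T : Fin m := ⟨t, ht⟩
  by_cases hfar : ∀ i : Fin m, i < T → ((t - i : ℕ) : ℕ∞) ≤ G.edist (y i) (y T)
  · refine Or.inr ⟨y, hcov, fun i j hij hj => ?_⟩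
    rcases Nat.lt_succ_iff_lt_or_eq.1 hj with hj | hj
    · exact hsep i j hij hj
    · obtain rfl : j = T := Fin.ext hj
      exact hfar i hij
  push Not at hfar
  obtain ⟨i, hiT, hi⟩ := hfar
  by_cases hpre : ⋃ l : Fin t, G.closedBall (y (Fin.castLE ht.le l)) (t - 1 - l) = Set.univ
  · exact Or.inl ((burningNumber_le_of_isSeparatedBelow ht.le hsep hpre).trans ht.le)
  obtain ⟨v, hv⟩ := (Set.ne_univ_iff_exists_notMem _).1 hpre
  have hsub : G.closedBall (y T) (m - 1 - T) ⊆ G.closedBall (y i) (m - 1 - i) := by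
    refine closedBall_subset_closedBall ?_
    have hiT' : (i : ℕ) < t := hiT
    rw [show t - (i : ℕ) = t - 1 - i + 1 by omega, Nat.cast_add, Nat.cast_one] at hi
    have hi' := Order.le_of_lt_add_one hi
    calc G.edist (y i) (y T) + ((m - 1 - t : ℕ) : ℕ∞)
        ≤ ((t - 1 - i : ℕ) : ℕ∞) + ((m - 1 - t : ℕ) : ℕ∞) := add_le_add_left hi' _
      _ ≤ ((m - 1 - i : ℕ) : ℕ∞) := by exact_mod_cast (by omega)
  refine Or.inr ⟨Function.update y T v, hcov.update hiT.ne hsub v, fun a b hab hb => ?_⟩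
  have haT : a ≠ T := Fin.ne_of_lt (hab.trans_le (Fin.le_def.2 (Nat.lt_succ_iff.1 hb)))
  rw [Function.update_of_ne haT]
  rcases Nat.lt_succ_iff_lt_or_eq.1 hb with hb | hb
  · rw [Function.update_of_ne (Fin.ne_of_lt (Fin.lt_def.2 hb))]
    exact hsep a b hab hb
  · obtain rfl : b = T := Fin.ext hb
    have hva : v ∉ G.closedBall (y a) (t - 1 - a) := fun h =>
      hv (Set.mem_iUnion.2 ⟨⟨a, hab⟩, h⟩)
    rw [Function.update_self, show t - (a : ℕ) = t - 1 - a + 1 by omega, Nat.cast_add,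
      Nat.cast_one]
    exact Order.add_one_le_of_lt (not_le.1 hva)

lemma IsBurningCover.burningNumber_le {m : ℕ} {x : Fin m → V} (hx : G.IsBurningCover x) :
    G.burningNumber ≤ m := by
  suffices h : ∀ t ≤ m, G.burningNumber ≤ m ∨
      ∃ y : Fin m → V, G.IsBurningCover y ∧ G.IsSeparatedBelow y t by
    obtain h | ⟨y, hcov, hsep⟩ := h m le_rfl
    exacts [h, burningNumber_le_of_isBurningSeq (isBurningSeq_of_isSeparatedBelow hsep hcov)]
  intro t ht
  induction t with
  | zero => exact Or.inr ⟨x, hx, fun _ _ _ hj => absurd hj (Nat.not_lt_zero _)⟩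
  | succ t ih =>
    obtain h | ⟨y, hcov, hsep⟩ := ih (by omega)
    exacts [Or.inl h, hcov.exists_isSeparatedBelow_succ hsep (by omega)]

end Cover

section StrongProd

variable {G : SimpleGraph V}

lemma isBurningSeq_strongProd_completeGraph {β : Type*} {k : ℕ} {s : Fin k → V}
    (hs : G.IsBurningSeq s)
    (hred : (⋃ l ∈ {l : Fin k | (l : ℕ) < k - 1}, G.closedBall (s l) (k - 1 - l)) = Set.univ)
    (c : β) : (G.strongProd (completeGraph β)).IsBurningSeq fun l => (s l, c) := by
  refine ⟨fun i j hij => (hs.1 i j hij).trans (edist_fst_le_edist_strongProd _ _ _ _), ?_⟩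
  refine Set.eq_univ_of_forall fun ⟨v, b⟩ => ?_
  obtain ⟨l, hl, hv⟩ := Set.mem_iUnion₂.1 (hred ▸ Set.mem_univ v)
  have hl' : (l : ℕ) < k - 1 := hl
  exact Set.mem_iUnion.2 ⟨l, closedBall_prod_univ_subset G (by omega) _ _ ⟨hv, trivial⟩⟩

lemma exists_isBurningSeq_burningNumber (h : ∃ k, ∃ s : Fin k → V, G.IsBurningSeq s) :
    ∃ s : Fin G.burningNumber → V, G.IsBurningSeq s :=
  Nat.sInf_mem h

lemma burningNumber_le_burningNumber_strongProd {H : SimpleGraph W} [Nonempty W]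
    (h : ∃ k, ∃ s : Fin k → V × W, (G.strongProd H).IsBurningSeq s) :
    G.burningNumber ≤ (G.strongProd H).burningNumber := by
  obtain ⟨s, hs⟩ := exists_isBurningSeq_burningNumber h
  refine IsBurningCover.burningNumber_le (x := fun l => (s l).1)
    (Set.eq_univ_of_forall fun v => ?_)
  obtain ⟨l, hl⟩ := Set.mem_iUnion.1 (hs.2 ▸ Set.mem_univ (v, Classical.arbitrary W))
  exact Set.mem_iUnion.2 ⟨l, (edist_fst_le_edist_strongProd G H _ _).trans hl⟩

end StrongProd

end SimpleGraph

theorem stmt14_general {α : Type*} (G : SimpleGraph α) (k : ℕ)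
    (hk : G.burningNumber = k) (s : Fin k → α) (hs : G.IsBurningSeq s)
    (hred : (⋃ l ∈ {l : Fin k | (l : ℕ) < k - 1},
        G.closedBall (s l) (k - 1 - (l : ℕ))) = Set.univ) :
    ∀ n : ℕ, 1 ≤ n →
      (G.strongProd (SimpleGraph.completeGraph (Fin n))).burningNumber = G.burningNumber := by
  intro n hn
  have : Nonempty (Fin n) := ⟨⟨0, hn⟩⟩
  have hlift := SimpleGraph.isBurningSeq_strongProd_completeGraph hs hred (⟨0, hn⟩ : Fin n)
  have hle := SimpleGraph.burningNumber_le_of_isBurningSeq hlift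
  have hge := SimpleGraph.burningNumber_le_burningNumber_strongProd ⟨k, _, hlift⟩
  omega

/-- If `G` has an optimal burning sequence whose last source is redundant, then
`b(G ⊠ K_n) = b(G)` for all `n`. -/
theorem stmt14 {α : Type*} [Fintype α] (G : SimpleGraph α) (k : ℕ)
    (hk : G.burningNumber = k) (s : Fin k → α) (hs : G.IsBurningSeq s)
    (hred : (⋃ l ∈ {l : Fin k | (l : ℕ) < k - 1},
        G.closedBall (s l) (k - 1 - (l : ℕ))) = Set.univ) :
    ∀ n : ℕ, 1 ≤ n →
      (G.strongProd (SimpleGraph.completeGraph (Fin n))).burningNumber = G.burningNumber :=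
  stmt14_general G k hk s hs hred
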